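/- Let G be a reaction network on species X, let ℰ ⊆ X be a set of independently conserved species in G, and let H be a reaction network with species set ℰ such that for every choice of rates H has exactly one positive steady state. If for every choice of rates the projected network G_{−ℰ} has at most l positive steady states in each stoichiometric compatibility class, then for every choice of rates the union network G∪H (whose reaction set is the union of the reactions of G and of H) has at most l positive steady states in each stoichiometric compatibility class. -/
import Mathlib


/-- A reaction `y → y'` is a pair of complexes, each a vector of
nonnegative integer coefficients indexed by the species: the source and the target. -/
abbrev Reaction (S : Type) : Type := (S → ℕ) × (S → ℕ)

section General

variable {S : Type} [Fintype S] [DecidableEq S]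

/-- The complex consisting of a single copy of species `s`. -/
def unitC (s : S) : S → ℕ := fun t => if t = s then 1 else 0

/-- The complex `a + b`. -/
def pairC (a b : S) : S → ℕ := fun t => (if t = a then 1 else 0) + (if t = b then 1 else 0)

/-- The mass action right-hand side `f_κ` of a network `R` with rates `κ`. -/
def massAction (R : Finset (Reaction S)) (κ : Reaction S → ℝ) (x : S → ℝ) : S → ℝ :=
  fun s => ∑ r ∈ R, κ r * (∏ t, x t ^ r.1 t) * ((r.2 s : ℝ) - (r.1 s : ℝ))

/-- The stoichiometric subspace of a network: the span of its reaction vectors. -/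
def stoichSubspace (R : Finset (Reaction S)) : Submodule ℝ (S → ℝ) :=
  Submodule.span ℝ ((fun r : Reaction S => fun s => ((r.2 s : ℝ) - (r.1 s : ℝ))) '' ↑R)

/-- A positive steady state of the mass action system `(R, κ)`. -/
def isPosSteadyState (R : Finset (Reaction S)) (κ : Reaction S → ℝ) (x : S → ℝ) : Prop :=
  (∀ s, 0 < x s) ∧ massAction R κ x = 0

/-- A steady state is nondegenerate if the kernel of the Jacobian of the mass action
right-hand side intersects the stoichiometric subspace trivially. -/
def nondegenerate (R : Finset (Reaction S)) (κ : Reaction S → ℝ) (x : S → ℝ) : Prop :=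
  ∀ v ∈ stoichSubspace R, fderiv ℝ (massAction R κ) x v = 0 → v = 0

/-- A network admits nondegenerate multistationarity if for some positive rates there are
two distinct nondegenerate positive steady states in the same stoichiometric
compatibility class. -/
def admitsNondegMultistationarity (R : Finset (Reaction S)) : Prop :=
  ∃ κ : Reaction S → ℝ, (∀ r ∈ R, 0 < κ r) ∧
    ∃ x y : S → ℝ, x ≠ y ∧
      isPosSteadyState R κ x ∧ isPosSteadyState R κ y ∧
      nondegenerate R κ x ∧ nondegenerate R κ y ∧
      y - x ∈ stoichSubspace R

/-- The inflow reaction `0 → s`. -/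
def inflow (s : S) : Reaction S := (fun _ => 0, unitC s)

/-- The outflow reaction `s → 0`. -/
def outflow (s : S) : Reaction S := (unitC s, fun _ => 0)

/-- The open network on `E`: add inflow and outflow reactions for every species of `E`. -/
def openOn (R : Finset (Reaction S)) (E : Finset S) : Finset (Reaction S) :=
  R ∪ E.image inflow ∪ E.image outflow

/-- A conservation law: a vector orthogonal to the stoichiometric subspace. -/
def conservationLaw (R : Finset (Reaction S)) (w : S → ℝ) : Prop :=
  ∀ v ∈ stoichSubspace R, ∑ s, w s * v s = 0

/-- A set `E` of species is independently conserved in `R` if there are conservation laws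
`L e` for `e ∈ E` such that `L e` has a nonzero coordinate at `e` and zero coordinate at
`e` for every other `L e'`, `e' ∈ E`. -/
def IndepConserved (R : Finset (Reaction S)) (E : Finset S) : Prop :=
  ∃ L : S → (S → ℝ), ∀ e ∈ E,
    conservationLaw R (L e) ∧ L e e ≠ 0 ∧ ∀ e' ∈ E, e' ≠ e → L e' e = 0

/-- A species is closed in `R` if neither its inflow nor its outflow is a reaction of `R`. -/
def ClosedIn (R : Finset (Reaction S)) (s : S) : Prop :=
  inflow s ∉ R ∧ outflow s ∉ R

/-- Projection of a complex onto the coordinates outside `E`. -/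
def projC (E : Finset S) (y : S → ℕ) : {s : S // s ∉ E} → ℕ := fun s => y s.val

/-- Projection of a reaction onto the coordinates outside `E`. -/
def projR (E : Finset S) (r : Reaction S) : Reaction {s : S // s ∉ E} :=
  (projC E r.1, projC E r.2)

/-- The projected network `G₋E` on the species outside `E`: project all reactions and
remove self-loops. -/
def projNet (R : Finset (Reaction S)) (E : Finset S) : Finset (Reaction {s : S // s ∉ E}) :=
  (R.image (projR E)).filter fun r => r.1 ≠ r.2

/-- Inclusion of a reaction on the species of `E` into a reaction on all of `S`. -/
def inclR (E : Finset S) (r : Reaction {s : S // s ∈ E}) : Reaction S :=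
  (fun s => if h : s ∈ E then r.1 ⟨s, h⟩ else 0,
   fun s => if h : s ∈ E then r.2 ⟨s, h⟩ else 0)

/-- `R` has at most `l` positive steady states in each stoichiometric compatibility class,
for every choice of positive reaction rates: there is no injective family of `l + 1`
positive steady states lying pairwise in the same compatibility class. -/
def atMostPosSS (R : Finset (Reaction S)) (l : ℕ) : Prop :=
  ∀ κ : Reaction S → ℝ, (∀ r ∈ R, 0 < κ r) →
    ∀ f : Fin (l + 1) → (S → ℝ),
      (∀ j, isPosSteadyState R κ (f j)) →
      (∀ j k, f k - f j ∈ stoichSubspace R) →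
      ¬ Function.Injective f

/-- Monostationarity: at most one positive steady state in each stoichiometric
compatibility class, for every choice of positive rates. -/
def monostationary (R : Finset (Reaction S)) : Prop :=
  atMostPosSS R 1

end General

/-- Species of the sequential `n`-site phosphorylation–dephosphorylation cycle:
the enzymes `E`, `F`, the substrates `S i` for `i = 0, …, n`, and the intermediates
`ES i` for `i = 0, …, n-1` and `FS i` (denoting `FS_{i+1}`) for `i = 0, …, n-1`. -/
inductive PS (n : ℕ) : Type
  | E : PS n
  | F : PS n
  | S : Fin (n + 1) → PS n
  | ES : Fin n → PS n
  | FS : Fin n → PS n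
deriving DecidableEq, Fintype

/-- The sequential `n`-site phosphorylation–dephosphorylation cycle `𝒫ⁿ`, with the `6n`
reactions `S_i + E ⇌ ES_i`, `ES_i → S_{i+1} + E` for `i = 0, …, n-1` and
`S_i + F ⇌ FS_i`, `FS_i → S_{i-1} + F` for `i = 1, …, n`. -/
def Pcycle (n : ℕ) : Finset (Reaction (PS n)) :=
  (Finset.univ.image fun i : Fin n => (pairC (PS.S i.castSucc) PS.E, unitC (PS.ES i))) ∪
  (Finset.univ.image fun i : Fin n => (unitC (PS.ES i), pairC (PS.S i.castSucc) PS.E)) ∪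
  (Finset.univ.image fun i : Fin n => (unitC (PS.ES i), pairC (PS.S i.succ) PS.E)) ∪
  (Finset.univ.image fun i : Fin n => (pairC (PS.S i.succ) PS.F, unitC (PS.FS i))) ∪
  (Finset.univ.image fun i : Fin n => (unitC (PS.FS i), pairC (PS.S i.succ) PS.F)) ∪
  (Finset.univ.image fun i : Fin n => (unitC (PS.FS i), pairC (PS.S i.castSucc) PS.F))


section AuxLemmas

variable {S : Type} [Fintype S] [DecidableEq S]

omit [DecidableEq S] in
lemma massAction_mem_stoich (R : Finset (Reaction S)) (κ : Reaction S → ℝ) (x : S → ℝ) :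
    massAction R κ x ∈ stoichSubspace R := by
  have : massAction R κ x =
      ∑ r ∈ R, (κ r * ∏ t, x t ^ r.1 t) • (fun s => ((r.2 s : ℝ) - (r.1 s : ℝ))) := by
    funext s
    simp [massAction, Finset.sum_apply]
  rw [this]
  exact Submodule.sum_mem _ fun r hr => Submodule.smul_mem _ _
    (Submodule.subset_span ⟨r, hr, rfl⟩)

omit [Fintype S] in
lemma inclR_injective (E : Finset S) : Function.Injective (inclR E) := by
  intro r r' h
  have h1 := congrArg Prod.fst h
  have h2 := congrArg Prod.snd h
  refine Prod.ext ?_ ?_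
  · funext ⟨s, hs⟩
    have := congrFun h1 s
    simpa [inclR, hs] using this
  · funext ⟨s, hs⟩
    have := congrFun h2 s
    simpa [inclR, hs] using this

lemma prod_incl (E : Finset S) (x : S → ℝ) (w : {s : S // s ∈ E} → ℕ) :
    (∏ t, x t ^ (if h : t ∈ E then w ⟨t, h⟩ else 0))
      = ∏ t : {s // s ∈ E}, x t.val ^ w t := by
  have : ∀ t : S, x t ^ (if h : t ∈ E then w ⟨t, h⟩ else 0)
      = (if h : t ∈ E then x t ^ w ⟨t, h⟩ else 1) := by
    intro t; split <;> simp
  simp only [this]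
  rw [Fintype.prod_dite]
  simp only [Finset.prod_const_one, mul_one]
  apply Finset.prod_congr _ fun _ _ => rfl
  congr!

lemma prod_split (E : Finset S) (x : S → ℝ) (w : S → ℕ) :
    (∏ t, x t ^ w t) =
      (∏ t : {s // s ∈ E}, x t.val ^ w t.val) * ∏ t : {s // s ∉ E}, x t.val ^ w t.val := by
  rw [← Fintype.prod_subtype_mul_prod_subtype (· ∈ E) (fun t => x t ^ w t)]
  congr 1 <;> (apply Finset.prod_congr _ fun _ _ => rfl) <;> congr!

end AuxLemmas

/-- Let `E` be independently conserved in `G` and let `H` be a network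
with species set `E` that has exactly one positive steady state for every choice of
positive rates. If, for every choice of positive rates, the projected network `G₋E` has
at most `l` positive steady states in each stoichiometric compatibility class, then the
union network `G ∪ H` (whose mass action right-hand side is the sum of those of `G` and
`H`) also has at most `l` positive steady states in each compatibility class. -/
theorem union_with_unique_steady_state {S : Type} [Fintype S] [DecidableEq S]
    (R : Finset (Reaction S)) (E : Finset S)
    (hIC : IndepConserved R E)
    (H : Finset (Reaction {s : S // s ∈ E}))
    (hH : ∀ κH : Reaction {s : S // s ∈ E} → ℝ, (∀ r ∈ H, 0 < κH r) →
        ∃! z : {s : S // s ∈ E} → ℝ, isPosSteadyState H κH z)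
    (l : ℕ)
    (hproj : atMostPosSS (projNet R E) l) :
    ∀ κ : Reaction S → ℝ,
      (∀ r ∈ R, 0 < κ r) → (∀ r ∈ H, 0 < κ (inclR E r)) →
      ∀ f : Fin (l + 1) → (S → ℝ),
        (∀ j, (∀ s, 0 < f j s) ∧
            massAction R κ (f j) + massAction (H.image (inclR E)) κ (f j) = 0) →
        (∀ j k, f k - f j ∈ stoichSubspace (R ∪ H.image (inclR E))) →
        ¬ Function.Injective f := by
  intro κ hκR hκHpos f hf hcomp hinj
  classical
  obtain ⟨L, hL⟩ := hIC
  set Himg : Finset (Reaction S) := H.image (inclR E) with hHimgdef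
  -- the H-part of the right-hand side is supported on E
  have hsupp : ∀ (x : S → ℝ) (s : S), s ∉ E → massAction Himg κ x s = 0 := by
    intro x s hs
    apply Finset.sum_eq_zero
    intro r hr
    obtain ⟨r0, _, rfl⟩ := Finset.mem_image.mp hr
    simp [inclR, hs]
  -- both parts vanish separately at every f j
  have hzero : ∀ j, massAction Himg κ (f j) = 0 ∧ massAction R κ (f j) = 0 := by
    intro j
    have htot : massAction R κ (f j) + massAction Himg κ (f j) = 0 := (hf j).2
    have h0 : ∀ s, massAction Himg κ (f j) s = - massAction R κ (f j) s := by
      intro s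
      have := congrFun htot s
      simp only [Pi.add_apply, Pi.zero_apply] at this
      linarith
    have hHe : ∀ e ∈ E, massAction Himg κ (f j) e = 0 := by
      intro e he
      have hcons := (hL e he).1 _ (massAction_mem_stoich R κ (f j))
      have hsum : ∑ s, L e s * massAction Himg κ (f j) s = 0 := by
        calc ∑ s, L e s * massAction Himg κ (f j) s
            = - ∑ s, L e s * massAction R κ (f j) s := by
              rw [← Finset.sum_neg_distrib]
              apply Finset.sum_congr rfl
              intro s _
              rw [h0]; ring
          _ = 0 := by rw [hcons]; ring
      have hsingle : ∑ s, L e s * massAction Himg κ (f j) s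
          = L e e * massAction Himg κ (f j) e := by
        apply Finset.sum_eq_single e
        · intro s _ hne
          by_cases hsE : s ∈ E
          · rw [(hL s hsE).2.2 e he (Ne.symm hne), zero_mul]
          · rw [hsupp (f j) s hsE, mul_zero]
        · intro h; exact absurd (Finset.mem_univ e) h
      rw [hsingle] at hsum
      exact (mul_eq_zero.mp hsum).resolve_left (hL e he).2.1
    have hH0 : massAction Himg κ (f j) = 0 := by
      funext s
      by_cases hs : s ∈ E
      · exact hHe s hs
      · exact hsupp (f j) s hs
    refine ⟨hH0, ?_⟩
    have := htot
    rw [hH0, add_zero] at this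
    exact this
  -- the restriction of each f j to E is a positive steady state of H
  set κH : Reaction {s : S // s ∈ E} → ℝ := fun r => κ (inclR E r) with hκHdef
  obtain ⟨z, hzss, huniq⟩ := hH κH hκHpos
  have hrestrict : ∀ j, (fun e : {s : S // s ∈ E} => f j e.val) = z := by
    intro j
    apply huniq
    refine ⟨fun e => (hf j).1 e.val, ?_⟩
    funext e
    have key : massAction H κH (fun e : {s : S // s ∈ E} => f j e.val) e
        = massAction Himg κ (f j) e.val := by
      simp only [massAction, hHimgdef]
      rw [Finset.sum_image (fun r _ r' _ h => inclR_injective E h)]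
      apply Finset.sum_congr rfl
      intro r hr
      have hm := prod_incl E (f j) r.1
      simp only [inclR] at hm ⊢
      rw [hm]
      simp [e.2]
      exact Or.inl (Or.inl rfl)
    show massAction H κH _ e = 0
    rw [key]
    exact congrFun (hzero j).1 e.val
  have hzpos : ∀ e, 0 < z e := by
    intro e
    rw [← hrestrict 0]
    exact (hf 0).1 e.val
  -- rates for the projected network
  set Rs : Finset (Reaction S) := R.filter (fun r => (projR E r).1 ≠ (projR E r).2) with hRsdef
  set κ' : Reaction {s : S // s ∉ E} → ℝ :=
    fun r' => ∑ r ∈ Rs.filter (fun r => projR E r = r'),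
      κ r * ∏ e : {s : S // s ∈ E}, z e ^ r.1 e.val with hκ'def
  have hκ'pos : ∀ r' ∈ projNet R E, 0 < κ' r' := by
    intro r' hr'
    rw [projNet, Finset.mem_filter, Finset.mem_image] at hr'
    obtain ⟨⟨r, hrR, hrproj⟩, hne⟩ := hr'
    apply Finset.sum_pos
    · intro r2 hr2
      rw [Finset.mem_filter, hRsdef, Finset.mem_filter] at hr2
      exact mul_pos (hκR r2 hr2.1.1) (Finset.prod_pos fun e _ => pow_pos (hzpos e) _)
    · refine ⟨r, ?_⟩
      rw [Finset.mem_filter, hRsdef, Finset.mem_filter]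
      exact ⟨⟨hrR, by rw [hrproj]; exact hne⟩, hrproj⟩
  -- the projections of the f j are positive steady states of the projected network
  set g : Fin (l + 1) → ({s : S // s ∉ E} → ℝ) := fun j σ => f j σ.val with hgdef
  have hgss : ∀ j, isPosSteadyState (projNet R E) κ' (g j) := by
    intro j
    refine ⟨fun σ => (hf j).1 σ.val, ?_⟩
    funext σ
    show (∑ r' ∈ projNet R E, κ' r' * (∏ t, g j t ^ r'.1 t) * ((r'.2 σ : ℝ) - (r'.1 σ : ℝ))) = 0
    have hmaps : ∀ r ∈ Rs, projR E r ∈ projNet R E := by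
      intro r hr
      rw [hRsdef, Finset.mem_filter] at hr
      exact Finset.mem_filter.mpr ⟨Finset.mem_image.mpr ⟨r, hr.1, rfl⟩, hr.2⟩
    have step1 : ∀ r' ∈ projNet R E,
        κ' r' * (∏ t, g j t ^ r'.1 t) * ((r'.2 σ : ℝ) - (r'.1 σ : ℝ))
        = ∑ r ∈ Rs.filter (fun r => projR E r = r'),
            κ r * (∏ t, f j t ^ r.1 t) * ((r.2 σ.val : ℝ) - (r.1 σ.val : ℝ)) := by
      intro r' hr'
      rw [hκ'def, Finset.sum_mul, Finset.sum_mul]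
      apply Finset.sum_congr rfl
      intro r hr
      rw [Finset.mem_filter] at hr
      have hp : projR E r = r' := hr.2
      subst hp
      have hfz : ∀ e : {s : S // s ∈ E}, f j e.val = z e :=
        fun e => congrFun (hrestrict j) e
      rw [prod_split E (f j) r.1]
      simp only [hfz]
      show κ r * (∏ e : {s : S // s ∈ E}, z e ^ r.1 e.val)
            * (∏ t : {s : S // s ∉ E}, g j t ^ r.1 t.val)
            * ((r.2 σ.val : ℝ) - (r.1 σ.val : ℝ))
          = κ r * ((∏ t : {s : S // s ∈ E}, z t ^ r.1 t.val)
            * ∏ t : {s : S // s ∉ E}, f j t.val ^ r.1 t.val)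
            * ((r.2 σ.val : ℝ) - (r.1 σ.val : ℝ))
      ring
    calc (∑ r' ∈ projNet R E, κ' r' * (∏ t, g j t ^ r'.1 t) * ((r'.2 σ : ℝ) - (r'.1 σ : ℝ)))
        = ∑ r' ∈ projNet R E, ∑ r ∈ Rs.filter (fun r => projR E r = r'),
            κ r * (∏ t, f j t ^ r.1 t) * ((r.2 σ.val : ℝ) - (r.1 σ.val : ℝ)) :=
          Finset.sum_congr rfl step1
      _ = ∑ r ∈ Rs, κ r * (∏ t, f j t ^ r.1 t) * ((r.2 σ.val : ℝ) - (r.1 σ.val : ℝ)) :=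
          Finset.sum_fiberwise_of_maps_to hmaps _
      _ = ∑ r ∈ R, κ r * (∏ t, f j t ^ r.1 t) * ((r.2 σ.val : ℝ) - (r.1 σ.val : ℝ)) := by
          apply Finset.sum_subset (by rw [hRsdef]; exact Finset.filter_subset _ _)
          intro r hrR hrns
          have : (projR E r).1 = (projR E r).2 := by
            by_contra hc
            exact hrns (by rw [hRsdef, Finset.mem_filter]; exact ⟨hrR, hc⟩)
          have h2 : r.1 σ.val = r.2 σ.val := congrFun this σ
          rw [h2]
          ring
      _ = massAction R κ (f j) σ.val := rfl
      _ = 0 := congrFun (hzero j).2 σ.val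
  -- compatibility classes project
  have hgcomp : ∀ j k, g k - g j ∈ stoichSubspace (projNet R E) := by
    intro j k
    set π : (S → ℝ) →ₗ[ℝ] ({s : S // s ∉ E} → ℝ) := LinearMap.funLeft ℝ ℝ Subtype.val with hπdef
    have hmap : Submodule.map π (stoichSubspace (R ∪ Himg)) ≤ stoichSubspace (projNet R E) := by
      rw [stoichSubspace, Submodule.map_span, Submodule.span_le]
      rintro v ⟨w, ⟨r, hrmem, rfl⟩, rfl⟩
      simp only [Finset.coe_union, Set.mem_union, Finset.mem_coe] at hrmem
      rcases hrmem with hrR | hrH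
      · by_cases hsl : (projR E r).1 = (projR E r).2
        · have hz : π (fun s => ((r.2 s : ℝ) - (r.1 s : ℝ))) = 0 := by
            funext σ
            show ((r.2 σ.val : ℝ) - (r.1 σ.val : ℝ)) = 0
            rw [show r.1 σ.val = r.2 σ.val from congrFun hsl σ]
            ring
          rw [hz]
          exact Submodule.zero_mem _
        · apply Submodule.subset_span
          exact ⟨projR E r,
            Finset.mem_coe.mpr (Finset.mem_filter.mpr ⟨Finset.mem_image.mpr ⟨r, hrR, rfl⟩, hsl⟩),
            rfl⟩
      · obtain ⟨r0, _, rfl⟩ := Finset.mem_image.mp hrH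
        have hz : π (fun s => (((inclR E r0).2 s : ℝ) - ((inclR E r0).1 s : ℝ))) = 0 := by
          funext σ
          show (((inclR E r0).2 σ.val : ℝ) - ((inclR E r0).1 σ.val : ℝ)) = 0
          simp [inclR, σ.2]
        rw [hz]
        exact Submodule.zero_mem _
    have : π (f k - f j) = g k - g j := rfl
    rw [← this]
    exact hmap (Submodule.mem_map_of_mem (hcomp j k))
  have hninj := hproj κ' hκ'pos g hgss hgcomp
  rw [Function.not_injective_iff] at hninj
  obtain ⟨j, k, hgeq, hjk⟩ := hninj
  apply hjk
  apply hinj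
  funext s
  by_cases hs : s ∈ E
  · calc f j s = z ⟨s, hs⟩ := congrFun (hrestrict j) ⟨s, hs⟩
      _ = f k s := (congrFun (hrestrict k) ⟨s, hs⟩).symm
  · exact congrFun hgeq ⟨s, hs⟩
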